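/- Let n ≥ 1 and α = l/m ∈ (0,2) with l, m relatively prime positive integers. The transition density p^α(t,x) = (2π)^{-n} ∫_{ℝⁿ} cos(x·ξ) e^{-t|ξ|^α} dξ of the n-dimensional symmetric α-stable process satisfies, for every (t,x) ∈ (0,∞) × ℝⁿ, the higher-order PDE Δ^l p^α(t,x) + (-1)^{l+1} ∂^{2m}/∂t^{2m} p^α(t,x) = 0, where Δ^l is the l-th iterate of the Laplacian in x. (Lemma 4.2 of the paper, due to DeBlassie.) -/

import Mathlib

open MeasureTheory Real Filter Topology RealInnerProductSpace Metric

noncomputable section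

abbrev E (n : ℕ) := EuclideanSpace ℝ (Fin n)

/-- The Laplacian of `f : ℝⁿ → ℝ` at `x`, as the sum of the second partial derivatives. -/
def lap {n : ℕ} (f : E n → ℝ) (x : E n) : ℝ :=
  ∑ i : Fin n, fderiv ℝ (fun y => fderiv ℝ f y (EuclideanSpace.single i 1)) x
    (EuclideanSpace.single i 1)

/-- The k-th iterate `Δ^k` of the Laplacian. -/
def lapIter {n : ℕ} : ℕ → (E n → ℝ) → (E n → ℝ)
  | 0, f => f
  | (k + 1), f => lap (lapIter k f)

/-- The n-dimensional symmetric α-stable transition density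
`p^α(t,x) = (2π)^{-n} ∫_{ℝⁿ} cos(x·ξ) e^{-t|ξ|^α} dξ`. -/
def stableKn (n : ℕ) (α t : ℝ) (x : E n) : ℝ :=
  ((2 * π) ^ n)⁻¹ * ∫ ξ : E n, Real.cos (⟪x, ξ⟫) * Real.exp (-t * ‖ξ‖ ^ α)

lemma lipCos : LipschitzWith 1 Real.cos := by
  apply lipschitzWith_of_nnnorm_deriv_le Real.differentiable_cos
  intro x
  rw [Real.deriv_cos, ← NNReal.coe_le_coe]
  simpa using Real.abs_sin_le_one x

lemma lipSin : LipschitzWith 1 Real.sin := by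
  apply lipschitzWith_of_nnnorm_deriv_le Real.differentiable_sin
  intro x
  rw [Real.deriv_sin, ← NNReal.coe_le_coe]
  simpa using Real.abs_cos_le_one x

lemma exists_bound (s t α : ℝ) (hs : 0 ≤ s) (ht : 0 < t) (hα : 0 < α) :
    ∃ C : ℝ, ∀ r : ℝ, 0 ≤ r → (1 + r) ^ s * Real.exp (-t * r ^ α) ≤ C := by
  set f : ℝ → ℝ := fun r => (1 + r) ^ s * Real.exp (-t * r ^ α) with hf
  have hcont : Continuous f := by
    apply Continuous.mul
    · exact (continuous_const.add continuous_id).rpow_const (fun x => Or.inr hs)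
    · exact Real.continuous_exp.comp
        (continuous_const.mul (continuous_id.rpow_const (fun x => Or.inr hα.le)))
  have htend : Tendsto f atTop (𝓝 0) := by
    have h1 : Tendsto (fun u : ℝ => u ^ (s / α) * Real.exp (-t * u)) atTop (𝓝 0) :=
      tendsto_rpow_mul_exp_neg_mul_atTop_nhds_zero (s / α) t ht
    have h2 : Tendsto (fun r : ℝ => r ^ α) atTop atTop := tendsto_rpow_atTop hα
    have h3 : Tendsto (fun r : ℝ => (r ^ α) ^ (s / α) * Real.exp (-t * r ^ α)) atTop (𝓝 0) :=
      h1.comp h2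
    have h4 : Tendsto (fun r : ℝ => r ^ s * Real.exp (-t * r ^ α)) atTop (𝓝 0) := by
      apply h3.congr'
      filter_upwards [eventually_gt_atTop (0:ℝ)] with r hr
      rw [← Real.rpow_mul hr.le]
      congr 2
      field_simp
    have h5 : Tendsto (fun r : ℝ => 2 ^ s * (r ^ s * Real.exp (-t * r ^ α))) atTop (𝓝 0) := by
      simpa using h4.const_mul ((2:ℝ) ^ s)
    apply tendsto_of_tendsto_of_tendsto_of_le_of_le' tendsto_const_nhds h5
    · filter_upwards [eventually_ge_atTop (0:ℝ)] with r hr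
      positivity
    · filter_upwards [eventually_ge_atTop (1:ℝ)] with r hr
      have h1r : (1:ℝ) + r ≤ 2 * r := by linarith
      have : (1 + r) ^ s ≤ (2 * r) ^ s :=
        Real.rpow_le_rpow (by linarith) h1r hs
      rw [Real.mul_rpow (by norm_num) (by linarith)] at this
      have he : (0:ℝ) < Real.exp (-t * r ^ α) := Real.exp_pos _
      calc (1 + r) ^ s * Real.exp (-t * r ^ α)
          ≤ 2 ^ s * r ^ s * Real.exp (-t * r ^ α) := by
            exact mul_le_mul_of_nonneg_right this he.le
        _ = 2 ^ s * (r ^ s * Real.exp (-t * r ^ α)) := by ring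
  obtain ⟨R, hR⟩ := (htend.eventually (eventually_lt_nhds zero_lt_one)).exists_forall_of_atTop
  obtain ⟨C0, hC0⟩ := (isCompact_Icc (a := (0:ℝ)) (b := max R 0)).exists_bound_of_continuousOn
      hcont.continuousOn
  refine ⟨max C0 1, fun r hr => ?_⟩
  rcases le_total r (max R 0) with h | h
  · have := hC0 r ⟨hr, h⟩
    rw [hf] at this
    simp only [Real.norm_eq_abs] at this
    exact le_max_of_le_left (le_trans (le_abs_self _) this)
  · exact le_max_of_le_right (hR r (le_trans (le_max_left _ _) h)).le

lemma integrable_rpow_mul_exp (n : ℕ) {β t α : ℝ} (hβ : 0 ≤ β) (ht : 0 < t) (hα : 0 < α) :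
    Integrable (fun ξ : E n => ‖ξ‖ ^ β * Real.exp (-t * ‖ξ‖ ^ α)) := by
  obtain ⟨C, hC⟩ := exists_bound (β + (n + 1)) t α (by positivity) ht hα
  have hcont : Continuous (fun ξ : E n => ‖ξ‖ ^ β * Real.exp (-t * ‖ξ‖ ^ α)) := by
    apply Continuous.mul
    · exact continuous_norm.rpow_const (fun x => Or.inr hβ)
    · exact Real.continuous_exp.comp
        (continuous_const.mul (continuous_norm.rpow_const (fun x => Or.inr hα.le)))
  have hint : Integrable (fun ξ : E n => C * (1 + ‖ξ‖) ^ (-((n:ℝ) + 1))) := by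
    apply Integrable.const_mul
    apply integrable_one_add_norm (r := (n:ℝ) + 1)
    · simp [finrank_euclideanSpace_fin]
  apply hint.mono' hcont.aestronglyMeasurable
  filter_upwards with ξ
  have h0 : (0:ℝ) ≤ ‖ξ‖ := norm_nonneg _
  have h1 : (0:ℝ) < 1 + ‖ξ‖ := by linarith
  have he : (0:ℝ) < Real.exp (-t * ‖ξ‖ ^ α) := Real.exp_pos _
  have step1 : ‖ξ‖ ^ β ≤ (1 + ‖ξ‖) ^ β := Real.rpow_le_rpow h0 (by linarith) hβ
  have step2 : (1 + ‖ξ‖) ^ β * Real.exp (-t * ‖ξ‖ ^ α)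
      ≤ C * (1 + ‖ξ‖) ^ (-((n:ℝ) + 1)) := by
    have key := hC ‖ξ‖ h0
    have expand : (1 + ‖ξ‖) ^ β
        = (1 + ‖ξ‖) ^ (β + ((n:ℝ) + 1)) * (1 + ‖ξ‖) ^ (-((n:ℝ) + 1)) := by
      rw [← Real.rpow_add h1]; ring_nf
    rw [expand]
    have hp : (0:ℝ) ≤ (1 + ‖ξ‖) ^ (-((n:ℝ) + 1)) := Real.rpow_nonneg h1.le _
    calc (1 + ‖ξ‖) ^ (β + ((n:ℝ) + 1)) * (1 + ‖ξ‖) ^ (-((n:ℝ) + 1)) * Real.exp (-t * ‖ξ‖ ^ α)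
        = ((1 + ‖ξ‖) ^ (β + ((n:ℝ) + 1)) * Real.exp (-t * ‖ξ‖ ^ α)) * (1 + ‖ξ‖) ^ (-((n:ℝ) + 1)) := by
          ring
      _ ≤ C * (1 + ‖ξ‖) ^ (-((n:ℝ) + 1)) := mul_le_mul_of_nonneg_right key hp
  have : ‖ξ‖ ^ β * Real.exp (-t * ‖ξ‖ ^ α) ≤ C * (1 + ‖ξ‖) ^ (-((n:ℝ) + 1)) :=
    le_trans (mul_le_mul_of_nonneg_right step1 he.le) step2
  rw [Real.norm_eq_abs, abs_of_nonneg (by positivity)]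
  exact this

lemma integrable_pow_mul_exp (n : ℕ) (k : ℕ) {t α : ℝ} (ht : 0 < t) (hα : 0 < α) :
    Integrable (fun ξ : E n => ‖ξ‖ ^ k * Real.exp (-t * ‖ξ‖ ^ α)) := by
  have := integrable_rpow_mul_exp n (β := (k:ℝ)) (Nat.cast_nonneg k) ht hα
  simpa [Real.rpow_natCast] using this

variable {n : ℕ}

def kerI (w : E n → ℝ) (x : E n) : ℝ := ∫ ξ : E n, Real.cos ⟪ξ, x⟫ * w ξ

lemma key (φ φ' : ℝ → ℝ) (hφ : ∀ y, HasDerivAt φ (φ' y) y)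
    (hφb : ∀ y, |φ y| ≤ 1) (hφl : LipschitzWith 1 φ) (hφc : Continuous φ)
    (hφ'c : Continuous φ')
    (u : E n → ℝ) (huc : Continuous u)
    (hu0 : Integrable (fun ξ : E n => |u ξ|))
    (hu1 : Integrable (fun ξ : E n => ‖ξ‖ * |u ξ|)) (x : E n) :
    Integrable (fun ξ : E n => (u ξ * φ' ⟪ξ, x⟫) • (innerSL ℝ ξ : E n →L[ℝ] ℝ)) volume ∧
      HasFDerivAt (fun y => ∫ ξ : E n, φ ⟪ξ, y⟫ * u ξ)
        (∫ ξ : E n, (u ξ * φ' ⟪ξ, x⟫) • (innerSL ℝ ξ : E n →L[ℝ] ℝ)) x := by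
  have hinner : ∀ y : E n, Continuous (fun ξ : E n => (⟪ξ, y⟫ : ℝ)) :=
    fun y => continuous_id.inner continuous_const
  apply hasFDerivAt_integral_of_dominated_loc_of_lip'
    (bound := fun ξ : E n => ‖ξ‖ * |u ξ|) (ball_mem_nhds x one_pos)
  · intro y _
    exact ((hφc.comp (hinner y)).mul huc).aestronglyMeasurable
  · apply hu0.mono' ((hφc.comp (hinner x)).mul huc).aestronglyMeasurable
    filter_upwards with ξ
    rw [Real.norm_eq_abs, Pi.mul_apply, Function.comp_apply, abs_mul]
    exact mul_le_of_le_one_left (abs_nonneg _) (hφb _)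
  · apply Continuous.aestronglyMeasurable
    exact ((huc.mul (hφ'c.comp (hinner x))).smul (innerSL ℝ : E n →L[ℝ] E n →L[ℝ] ℝ).continuous)
  · filter_upwards with ξ
    intro y _
    have h1 : dist (φ ⟪ξ, y⟫) (φ ⟪ξ, x⟫) ≤ dist (⟪ξ, y⟫ : ℝ) ⟪ξ, x⟫ := by
      simpa using hφl.dist_le_mul ⟪ξ, y⟫ ⟪ξ, x⟫
    rw [Real.dist_eq, Real.dist_eq, ← inner_sub_right] at h1
    have h2 : |(⟪ξ, y - x⟫ : ℝ)| ≤ ‖ξ‖ * ‖y - x‖ := abs_real_inner_le_norm ξ (y - x)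
    calc ‖φ ⟪ξ, y⟫ * u ξ - φ ⟪ξ, x⟫ * u ξ‖
        = |φ ⟪ξ, y⟫ - φ ⟪ξ, x⟫| * |u ξ| := by
          rw [← sub_mul, Real.norm_eq_abs, abs_mul]
      _ ≤ (‖ξ‖ * ‖y - x‖) * |u ξ| := by
          exact mul_le_mul_of_nonneg_right (le_trans h1 h2) (abs_nonneg _)
      _ = ‖ξ‖ * |u ξ| * ‖y - x‖ := by ring
  · exact hu1
  · filter_upwards with ξ
    have h1 : HasFDerivAt (fun y : E n => (⟪ξ, y⟫ : ℝ)) (innerSL ℝ ξ) x :=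
      (innerSL ℝ ξ).hasFDerivAt
    have h2 : HasFDerivAt (fun y : E n => φ ⟪ξ, y⟫)
        (φ' ⟪ξ, x⟫ • (innerSL ℝ ξ : E n →L[ℝ] ℝ)) x :=
      (hφ ⟪ξ, x⟫).comp_hasFDerivAt x h1
    have h3 := h2.mul_const (u ξ)
    rw [smul_smul] at h3
    exact h3

lemma key' (φ φ' : ℝ → ℝ) (hφ : ∀ y, HasDerivAt φ (φ' y) y)
    (hφb : ∀ y, |φ y| ≤ 1) (hφl : LipschitzWith 1 φ) (hφc : Continuous φ)
    (hφ'c : Continuous φ')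
    (u : E n → ℝ) (huc : Continuous u)
    (hu0 : Integrable (fun ξ : E n => |u ξ|))
    (hu1 : Integrable (fun ξ : E n => ‖ξ‖ * |u ξ|)) (x v : E n) :
    fderiv ℝ (fun y => ∫ ξ : E n, φ ⟪ξ, y⟫ * u ξ) x v
      = ∫ ξ : E n, u ξ * φ' ⟪ξ, x⟫ * ⟪ξ, v⟫ := by
  obtain ⟨hint, hder⟩ := key φ φ' hφ hφb hφl hφc hφ'c u huc hu0 hu1 x
  rw [hder.fderiv, ContinuousLinearMap.integral_apply hint]
  exact integral_congr_ae (Filter.Eventually.of_forall fun ξ => by simp [smul_eq_mul])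

lemma sum_inner_single_sq (ξ : E n) :
    ∑ i : Fin n, (⟪ξ, EuclideanSpace.single i 1⟫ : ℝ) ^ 2 = ‖ξ‖ ^ 2 := by
  have h : ∀ i : Fin n, (⟪ξ, EuclideanSpace.single i 1⟫ : ℝ) = ξ i := by
    intro i
    simp [EuclideanSpace.inner_single_right]
  simp_rw [h]
  rw [EuclideanSpace.norm_eq, Real.sq_sqrt (by positivity)]
  simp [sq_abs]

lemma lap_ker (w : E n → ℝ) (hwc : Continuous w)
    (hw : ∀ k : ℕ, Integrable (fun ξ : E n => ‖ξ‖ ^ k * w ξ)) (x : E n) :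
    lap (kerI w) x = kerI (fun ξ => -(‖ξ‖ ^ 2) * w ξ) x := by
  have hwa : ∀ k : ℕ, Integrable (fun ξ : E n => ‖ξ‖ ^ k * |w ξ|) := by
    intro k
    have := (hw k).abs
    simpa [abs_mul, abs_pow, abs_norm] using this
  have hw0 : Integrable (fun ξ : E n => |w ξ|) := by simpa using hwa 0
  have hw1 : Integrable (fun ξ : E n => ‖ξ‖ * |w ξ|) := by simpa using hwa 1
  -- first derivative
  have h1 : ∀ (y v : E n), fderiv ℝ (kerI w) y v
      = ∫ ξ : E n, w ξ * (-Real.sin ⟪ξ, y⟫) * ⟪ξ, v⟫ := by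
    intro y v
    exact key' Real.cos (fun a => -Real.sin a) (fun a => Real.hasDerivAt_cos a)
      Real.abs_cos_le_one lipCos Real.continuous_cos Real.continuous_sin.neg
      w hwc hw0 hw1 y v
  -- second derivatives
  set e : Fin n → E n := fun i => EuclideanSpace.single i 1 with he
  have hnorm_e : ∀ i, ‖e i‖ = 1 := by
    intro i; simp [he, EuclideanSpace.norm_single]
  have huint : ∀ i : Fin n, ∀ k : ℕ,
      Integrable (fun ξ : E n => ‖ξ‖ ^ k * |(-(w ξ * ⟪ξ, e i⟫) : ℝ)|) := by
    intro i k
    apply (hwa (k + 1)).mono'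
    · exact Continuous.aestronglyMeasurable (by
        apply Continuous.mul (by continuity)
        exact ((hwc.mul (continuous_id.inner continuous_const)).neg).abs)
    · filter_upwards with ξ
      have hip : |(⟪ξ, e i⟫ : ℝ)| ≤ ‖ξ‖ := by
        have := abs_real_inner_le_norm ξ (e i)
        simpa [hnorm_e i] using this
      rw [Real.norm_eq_abs, abs_of_nonneg (by positivity)]
      calc ‖ξ‖ ^ k * |(-(w ξ * ⟪ξ, e i⟫) : ℝ)| = ‖ξ‖ ^ k * (|w ξ| * |(⟪ξ, e i⟫ : ℝ)|) := by
            rw [abs_neg, abs_mul]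
        _ ≤ ‖ξ‖ ^ k * (|w ξ| * ‖ξ‖) := by gcongr
        _ = ‖ξ‖ ^ (k + 1) * |w ξ| := by ring
  have h3 : ∀ i : Fin n, fderiv ℝ (fun y => fderiv ℝ (kerI w) y (e i)) x (e i)
      = ∫ ξ : E n, (-(w ξ * ⟪ξ, e i⟫)) * Real.cos ⟪ξ, x⟫ * ⟪ξ, e i⟫ := by
    intro i
    have heq : (fun y => fderiv ℝ (kerI w) y (e i))
        = fun y => ∫ ξ : E n, Real.sin ⟪ξ, y⟫ * (-(w ξ * ⟪ξ, e i⟫)) := by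
      funext y
      rw [h1 y (e i)]
      exact integral_congr_ae (Filter.Eventually.of_forall fun ξ => by ring)
    rw [heq]
    exact key' Real.sin Real.cos (fun a => Real.hasDerivAt_sin a)
      Real.abs_sin_le_one lipSin Real.continuous_sin Real.continuous_cos
      (fun ξ => -(w ξ * ⟪ξ, e i⟫))
      ((hwc.mul (continuous_id.inner continuous_const)).neg)
      (by simpa using huint i 0) (by simpa using huint i 1) x (e i)
  have hterm_int : ∀ i : Fin n,
      Integrable (fun ξ : E n => (-(w ξ * ⟪ξ, e i⟫)) * Real.cos ⟪ξ, x⟫ * ⟪ξ, e i⟫) := by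
    intro i
    apply (hwa 2).mono'
    · exact Continuous.aestronglyMeasurable (by
        exact ((hwc.mul (continuous_id.inner continuous_const)).neg.mul
          (Real.continuous_cos.comp (continuous_id.inner continuous_const))).mul
          (continuous_id.inner continuous_const))
    · filter_upwards with ξ
      have hip : |(⟪ξ, e i⟫ : ℝ)| ≤ ‖ξ‖ := by
        have := abs_real_inner_le_norm ξ (e i)
        simpa [hnorm_e i] using this
      have hcos : |Real.cos ⟪ξ, x⟫| ≤ 1 := Real.abs_cos_le_one _
      have habs : (0:ℝ) ≤ |w ξ| := abs_nonneg _
      rw [Real.norm_eq_abs, abs_mul, abs_mul, abs_neg, abs_mul]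
      calc |w ξ| * |(⟪ξ, e i⟫ : ℝ)| * |Real.cos ⟪ξ, x⟫| * |(⟪ξ, e i⟫ : ℝ)|
          ≤ |w ξ| * ‖ξ‖ * 1 * ‖ξ‖ := by gcongr
        _ = ‖ξ‖ ^ 2 * |w ξ| := by ring
  have hlap : lap (kerI w) x = ∑ i : Fin n,
      ∫ ξ : E n, (-(w ξ * ⟪ξ, e i⟫)) * Real.cos ⟪ξ, x⟫ * ⟪ξ, e i⟫ := by
    unfold lap
    exact Finset.sum_congr rfl fun i _ => h3 i
  rw [hlap, ← integral_finset_sum Finset.univ (fun i _ => hterm_int i)]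
  apply integral_congr_ae
  filter_upwards with ξ
  have hsum := sum_inner_single_sq (n := n) ξ
  calc ∑ i : Fin n, (-(w ξ * ⟪ξ, e i⟫)) * Real.cos ⟪ξ, x⟫ * ⟪ξ, e i⟫
      = ∑ i : Fin n, (-(w ξ) * Real.cos ⟪ξ, x⟫) * (⟪ξ, e i⟫ : ℝ) ^ 2 := by
        exact Finset.sum_congr rfl fun i _ => by ring
    _ = (-(w ξ) * Real.cos ⟪ξ, x⟫) * ∑ i : Fin n, (⟪ξ, e i⟫ : ℝ) ^ 2 := by
        rw [Finset.mul_sum]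
    _ = Real.cos ⟪ξ, x⟫ * (-(‖ξ‖ ^ 2) * w ξ) := by rw [hsum]; ring

lemma W_cont {t α : ℝ} (hα : 0 < α) (c : ℝ) (j : ℕ) :
    Continuous (fun ξ : E n => (-(‖ξ‖ ^ 2)) ^ j * (c * Real.exp (-t * ‖ξ‖ ^ α))) := by
  apply Continuous.mul
  · exact ((continuous_norm.pow 2).neg).pow j
  · exact continuous_const.mul (Real.continuous_exp.comp
      (continuous_const.mul (continuous_norm.rpow_const (fun x => Or.inr hα.le))))

lemma W_int {t α : ℝ} (ht : 0 < t) (hα : 0 < α) (c : ℝ) (j k : ℕ) :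
    Integrable (fun ξ : E n => ‖ξ‖ ^ k * ((-(‖ξ‖ ^ 2)) ^ j * (c * Real.exp (-t * ‖ξ‖ ^ α)))) := by
  have heq : (fun ξ : E n => ‖ξ‖ ^ k * ((-(‖ξ‖ ^ 2)) ^ j * (c * Real.exp (-t * ‖ξ‖ ^ α))))
      = fun ξ : E n => ((-1 : ℝ) ^ j * c) * (‖ξ‖ ^ (k + 2 * j) * Real.exp (-t * ‖ξ‖ ^ α)) := by
    funext ξ
    rw [neg_pow]
    ring
  rw [heq]
  exact (integrable_pow_mul_exp n (k + 2 * j) ht hα).const_mul _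

lemma lapIter_ker {t α : ℝ} (ht : 0 < t) (hα : 0 < α) (c : ℝ) (j : ℕ) :
    lapIter (n := n) j (kerI (fun ξ => c * Real.exp (-t * ‖ξ‖ ^ α)))
      = kerI (fun ξ => (-(‖ξ‖ ^ 2)) ^ j * (c * Real.exp (-t * ‖ξ‖ ^ α))) := by
  induction j with
  | zero =>
    simp only [lapIter]
    have hw : (fun ξ : E n => c * Real.exp (-t * ‖ξ‖ ^ α))
        = (fun ξ : E n => (-(‖ξ‖ ^ 2)) ^ 0 * (c * Real.exp (-t * ‖ξ‖ ^ α))) := by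
      funext ξ; rw [pow_zero, one_mul]
    rw [hw]
  | succ j ih =>
    show lap _ = _
    rw [ih]
    funext x
    rw [lap_ker _ (W_cont hα c j) (W_int ht hα c j) x]
    unfold kerI
    apply integral_congr_ae
    filter_upwards with ξ
    rw [pow_succ]
    ring

lemma hasDerivAt_T (x : E n) {α : ℝ} (hα : 0 < α) (k : ℕ) {τ : ℝ} (hτ : 0 < τ) :
    HasDerivAt (fun σ => ∫ ξ : E n,
        Real.cos ⟪x, ξ⟫ * ((-(‖ξ‖ ^ α)) ^ k * Real.exp (-σ * ‖ξ‖ ^ α)))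
      (∫ ξ : E n, Real.cos ⟪x, ξ⟫ * ((-(‖ξ‖ ^ α)) ^ (k + 1) * Real.exp (-τ * ‖ξ‖ ^ α))) τ := by
  have hrpow : ∀ (ξ : E n) (j : ℕ), (‖ξ‖ ^ α) ^ j = ‖ξ‖ ^ (α * j) := by
    intro ξ j
    rw [Real.rpow_mul (norm_nonneg ξ), Real.rpow_natCast]
  have hcontξ : ∀ (σ : ℝ) (j : ℕ), Continuous (fun ξ : E n =>
      Real.cos ⟪x, ξ⟫ * ((-(‖ξ‖ ^ α)) ^ j * Real.exp (-σ * ‖ξ‖ ^ α))) := by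
    intro σ j
    apply Continuous.mul
    · exact Real.continuous_cos.comp (continuous_const.inner continuous_id)
    · exact Continuous.mul (((continuous_norm.rpow_const (fun y => Or.inr hα.le)).neg).pow j)
        (Real.continuous_exp.comp
          (continuous_const.mul (continuous_norm.rpow_const (fun y => Or.inr hα.le))))
  have habs : ∀ (σ : ℝ) (j : ℕ) (ξ : E n), 0 < σ →
      |Real.cos ⟪x, ξ⟫ * ((-(‖ξ‖ ^ α)) ^ j * Real.exp (-σ * ‖ξ‖ ^ α))|
        ≤ ‖ξ‖ ^ (α * j) * Real.exp (-σ * ‖ξ‖ ^ α) := by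
    intro σ j ξ hσ
    rw [abs_mul, abs_mul, abs_pow, abs_neg, abs_of_nonneg (Real.rpow_nonneg (norm_nonneg ξ) α),
      abs_of_nonneg (Real.exp_pos _).le, hrpow]
    exact mul_le_of_le_one_left (by positivity) (Real.abs_cos_le_one _)
  have key := hasDerivAt_integral_of_dominated_loc_of_deriv_le
    (F := fun σ (ξ : E n) => Real.cos ⟪x, ξ⟫ * ((-(‖ξ‖ ^ α)) ^ k * Real.exp (-σ * ‖ξ‖ ^ α)))
    (F' := fun σ (ξ : E n) => Real.cos ⟪x, ξ⟫ * ((-(‖ξ‖ ^ α)) ^ (k + 1) * Real.exp (-σ * ‖ξ‖ ^ α)))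
    (x₀ := τ) (s := ball τ (τ / 2)) (μ := volume)
    (bound := fun ξ : E n => ‖ξ‖ ^ (α * (k + 1)) * Real.exp (-(τ / 2) * ‖ξ‖ ^ α))
    (ball_mem_nhds τ (by positivity))
    (Filter.Eventually.of_forall fun σ => (hcontξ σ k).aestronglyMeasurable)
    ?_ ((hcontξ τ (k + 1)).aestronglyMeasurable) ?_ ?_ ?_
  · exact key.2
  · -- integrability of F τ
    apply (integrable_rpow_mul_exp n (β := α * k) (by positivity) hτ hα).mono'
      (hcontξ τ k).aestronglyMeasurable
    filter_upwards with ξ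
    rw [Real.norm_eq_abs]
    exact habs τ k ξ hτ
  · -- bound
    filter_upwards with ξ
    intro σ hσ
    rw [mem_ball, Real.dist_eq, abs_lt] at hσ
    have hσ2 : τ / 2 ≤ σ := by linarith [hσ.1]
    have h1 := habs σ (k + 1) ξ (by linarith)
    push_cast at h1
    refine le_trans h1 ?_
    have : Real.exp (-σ * ‖ξ‖ ^ α) ≤ Real.exp (-(τ / 2) * ‖ξ‖ ^ α) := by
      apply Real.exp_le_exp.mpr
      have := Real.rpow_nonneg (norm_nonneg ξ) α
      nlinarith
    exact mul_le_mul_of_nonneg_left this (Real.rpow_nonneg (norm_nonneg ξ) _)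
  · exact integrable_rpow_mul_exp n (by positivity) (by positivity) hα
  · -- differentiability
    filter_upwards with ξ
    intro σ hσ
    have h1 : HasDerivAt (fun σ : ℝ => -σ * ‖ξ‖ ^ α) (-1 * ‖ξ‖ ^ α) σ :=
      (hasDerivAt_id σ).neg.mul_const _
    have h2 := h1.exp
    have h3 := (h2.const_mul ((-(‖ξ‖ ^ α)) ^ k)).const_mul (Real.cos ⟪x, ξ⟫)
    refine h3.congr_deriv ?_
    rw [pow_succ]
    ring

lemma iteratedDeriv_stableKn (x : E n) {α : ℝ} (hα : 0 < α) (k : ℕ) :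
    ∀ τ : ℝ, 0 < τ → iteratedDeriv k (fun σ => stableKn n α σ x) τ
      = ((2 * π) ^ n)⁻¹
          * ∫ ξ : E n, Real.cos ⟪x, ξ⟫ * ((-(‖ξ‖ ^ α)) ^ k * Real.exp (-τ * ‖ξ‖ ^ α)) := by
  induction k with
  | zero =>
    intro τ hτ
    rw [iteratedDeriv_zero]
    unfold stableKn
    congr 1
    apply integral_congr_ae
    filter_upwards with ξ
    rw [pow_zero, one_mul]
  | succ k ih =>
    intro τ hτ
    rw [iteratedDeriv_succ]
    have hEE : iteratedDeriv k (fun σ => stableKn n α σ x)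
        =ᶠ[𝓝 τ] fun σ => ((2 * π) ^ n)⁻¹
          * ∫ ξ : E n, Real.cos ⟪x, ξ⟫ * ((-(‖ξ‖ ^ α)) ^ k * Real.exp (-σ * ‖ξ‖ ^ α)) := by
      filter_upwards [Ioi_mem_nhds hτ] with σ hσ
      exact ih σ hσ
    rw [hEE.deriv_eq]
    exact (((hasDerivAt_T x hα k hτ).const_mul (((2 * π) ^ n)⁻¹))).deriv

/-- **Lemma 4.2** (DeBlassie): for `α = l/m ∈ (0,2)` with `l, m` relatively prime, the
α-stable transition density satisfies `Δ^l p^α + (-1)^{l+1} ∂^{2m}p^α/∂t^{2m} = 0`. -/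
theorem stmt8 (n : ℕ) (hn : 1 ≤ n) (l m : ℕ) (hl : 0 < l) (hm : 0 < m)
    (hcop : Nat.Coprime l m) (hα : (l : ℝ) / m < 2) :
    ∀ t > (0:ℝ), ∀ x : E n,
      lapIter l (stableKn n ((l : ℝ) / m) t) x
        + (-1 : ℝ) ^ (l + 1)
            * iteratedDeriv (2 * m) (fun τ => stableKn n ((l : ℝ) / m) τ x) t = 0 := by
  intro t ht x
  set α : ℝ := (l : ℝ) / m with hαdef
  have hm' : (0:ℝ) < m := by exact_mod_cast hm
  have hl' : (0:ℝ) < l := by exact_mod_cast hl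
  have hα0 : 0 < α := div_pos hl' hm'
  set c : ℝ := ((2 * π) ^ n)⁻¹ with hc
  -- the common integral
  set J : ℝ := ∫ ξ : E n, Real.cos ⟪x, ξ⟫ * (‖ξ‖ ^ ((2 * l : ℕ) : ℝ) * Real.exp (-t * ‖ξ‖ ^ α))
    with hJ
  -- spatial side
  have hspace : lapIter l (stableKn n α t) x = ((-1:ℝ) ^ l * c) * J := by
    have hfun : stableKn n α t = kerI (fun ξ : E n => c * Real.exp (-t * ‖ξ‖ ^ α)) := by
      funext y
      unfold stableKn kerI
      rw [← integral_const_mul]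
      apply integral_congr_ae
      filter_upwards with ξ
      rw [real_inner_comm]
      ring
    rw [hfun, lapIter_ker ht hα0 c l]
    unfold kerI
    rw [hJ, ← integral_const_mul]
    apply integral_congr_ae
    filter_upwards with ξ
    rw [real_inner_comm, neg_pow (‖ξ‖ ^ 2) l, Real.rpow_natCast, pow_mul']
    ring
  -- time side
  have htime : iteratedDeriv (2 * m) (fun τ => stableKn n α τ x) t = c * J := by
    rw [iteratedDeriv_stableKn x hα0 (2 * m) t ht]
    congr 1
    apply integral_congr_ae
    filter_upwards with ξ
    have h1 : (-(‖ξ‖ ^ α)) ^ (2 * m) = (‖ξ‖ ^ α) ^ (2 * m) :=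
      Even.neg_pow (even_two_mul m) _
    have h2 : ((‖ξ‖ : ℝ) ^ α) ^ (2 * m) = ‖ξ‖ ^ ((2 * l : ℕ) : ℝ) := by
      rw [← Real.rpow_natCast (‖ξ‖ ^ α) (2 * m), ← Real.rpow_mul (norm_nonneg ξ)]
      congr 1
      push_cast
      rw [hαdef]
      field_simp
    rw [h1, h2]
  rw [hspace, htime]
  rw [pow_succ]
  ring
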